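/- Let X be a topological space, F ⊆ X a functionally closed set, (h_n)_{n≥1} a sequence of continuous functions h_n : X → ℝ with F ⊆ h_n⁻¹(0) for every n, and G = X \ F. Then there exists a locally finite partition of unity (φ_n)_{n≥0} on G (continuous functions φ_n : G → [0,1] summing to 1, with locally finite supports) such that, setting G_n = {x ∈ G : φ_n(x) > 0}: (a) the closure of G_n in X is disjoint from F for every n ≥ 0; and (b) G_n ⊆ h_n⁻¹((−1/n, 1/n)) for every n ≥ 1. -/

import Mathlib

/-!
Everything is read off one continuous gauge `θ : X → [0, ∞)` with `θ⁻¹' {0} = F`, composed with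
a fixed locally finite partition of unity `(dyadicBump n)` of `(0, ∞)` whose `n`-th member is
supported in `[2⁻ⁿ⁻¹, 2¹⁻ⁿ]` (in `[1/2, ∞)` for `n = 0`). The closure of a support then lies in
`{θ ≥ 2⁻ⁿ⁻¹}`, away from `F`, and only finitely many supports meet `{θ > θ x / 2}`. For (b) take
`θ = ψ + 2 ∑ₖ min 1 (k |hₖ|) / 2ᵏ`, where `ψ` defines `F`: wherever `|hₙ| ≥ 1/n`, the `n`-th term
alone gives `θ ≥ 2¹⁻ⁿ`, outside the support of the `n`-th bump.
-/

open Set Filter Topology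

/- `dyadicRamp m` climbs from `0` to `1` on `[2⁻ᵐ, 2¹⁻ᵐ]`, except that `dyadicRamp 0 = 0`: this
makes the partial sums of the bumps below telescope to `dyadicRamp N`, which is `1` for large
`N`. -/
noncomputable def dyadicRamp : ℕ → ℝ → ℝ
  | 0, _ => 0
  | m + 1, t => projIcc (0 : ℝ) 1 zero_le_one (2 ^ (m + 1) * t - 1)

lemma dyadicRamp_mem_Icc (m : ℕ) (t : ℝ) : dyadicRamp m t ∈ Icc (0 : ℝ) 1 := by
  cases m with
  | zero => simp [dyadicRamp]
  | succ m => exact (projIcc _ _ _ _).2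

lemma continuous_dyadicRamp (m : ℕ) : Continuous (dyadicRamp m) := by
  cases m with
  | zero => exact continuous_const
  | succ m => exact continuous_subtype_val.comp (continuous_projIcc.comp (by fun_prop))

lemma monotone_dyadicRamp (m : ℕ) : Monotone (dyadicRamp m) := by
  cases m with
  | zero => exact monotone_const
  | succ m =>
    exact fun s t hst => monotone_projIcc zero_le_one <|
      sub_le_sub_right (mul_le_mul_of_nonneg_left hst (by positivity)) 1

lemma dyadicRamp_le_succ (m : ℕ) {t : ℝ} (ht : 0 ≤ t) : dyadicRamp m t ≤ dyadicRamp (m + 1) t := by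
  cases m with
  | zero => exact (dyadicRamp_mem_Icc 1 t).1
  | succ m =>
    refine monotone_projIcc _ (sub_le_sub_right (mul_le_mul_of_nonneg_right ?_ ht) 1)
    exact pow_le_pow_right₀ one_le_two (Nat.le_succ _)

lemma dyadicRamp_eq_one {m : ℕ} {t : ℝ} (hm : m ≠ 0) (ht : 2 ≤ 2 ^ m * t) :
    dyadicRamp m t = 1 := by
  obtain ⟨m, rfl⟩ := Nat.exists_eq_add_one_of_ne_zero hm
  have h1 : (1 : ℝ) ≤ 2 ^ (m + 1) * t - 1 := by linarith
  simp [dyadicRamp, projIcc_of_right_le _ h1]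

lemma one_lt_of_dyadicRamp_pos {m : ℕ} {t : ℝ} (h : 0 < dyadicRamp m t) : 1 < 2 ^ m * t := by
  cases m with
  | zero => simp [dyadicRamp] at h
  | succ m =>
    by_contra! ht
    simp [dyadicRamp, projIcc_of_le_left _ (sub_nonpos.2 ht)] at h

lemma lt_two_of_dyadicRamp_lt_one {m : ℕ} {t : ℝ} (hm : m ≠ 0) (h : dyadicRamp m t < 1) :
    2 ^ m * t < 2 := by
  by_contra! ht
  exact h.ne (dyadicRamp_eq_one hm ht)

lemma eventually_dyadicRamp_eq_one {t : ℝ} (ht : 0 < t) : ∀ᶠ m in atTop, dyadicRamp m t = 1 := by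
  have hpow := (tendsto_pow_atTop_atTop_of_one_lt one_lt_two).atTop_mul_const ht
  filter_upwards [hpow.eventually_ge_atTop 2, eventually_ne_atTop 0] with m ht hm
  exact dyadicRamp_eq_one hm ht

noncomputable def dyadicBump (n : ℕ) (t : ℝ) : ℝ := dyadicRamp (n + 1) t - dyadicRamp n t

lemma dyadicBump_mem_Icc (n : ℕ) {t : ℝ} (ht : 0 ≤ t) : dyadicBump n t ∈ Icc (0 : ℝ) 1 :=
  ⟨sub_nonneg.2 (dyadicRamp_le_succ n ht),
    (sub_le_self _ (dyadicRamp_mem_Icc n t).1).trans (dyadicRamp_mem_Icc _ t).2⟩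

lemma continuous_dyadicBump (n : ℕ) : Continuous (dyadicBump n) :=
  (continuous_dyadicRamp _).sub (continuous_dyadicRamp _)

lemma eventually_dyadicBump_eq_zero {t : ℝ} (ht : 0 < t) :
    ∀ᶠ n in atTop, ∀ s, t ≤ s → dyadicBump n s = 0 := by
  obtain ⟨N, hN⟩ := eventually_atTop.1 (eventually_dyadicRamp_eq_one ht)
  have hone : ∀ m ≥ N, ∀ s, t ≤ s → dyadicRamp m s = 1 := fun m hm s hs =>
    le_antisymm (dyadicRamp_mem_Icc m s).2 ((hN m hm).symm.trans_le (monotone_dyadicRamp m hs))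
  filter_upwards [eventually_ge_atTop N] with n hn s hs
  rw [dyadicBump, hone n hn s hs, hone (n + 1) (by omega) s hs, sub_self]

lemma hasSum_dyadicBump {t : ℝ} (ht : 0 < t) : HasSum (fun n => dyadicBump n t) 1 := by
  obtain ⟨N, hN⟩ :=
    eventually_atTop.1 ((eventually_dyadicBump_eq_zero ht).and (eventually_dyadicRamp_eq_one ht))
  convert hasSum_sum_of_ne_finset_zero (L := SummationFilter.unconditional ℕ) (s := Finset.range N)
    fun n hn => (hN n (by simpa using hn)).1 t le_rfl
  simp only [dyadicBump, Finset.sum_range_sub (fun m => dyadicRamp m t), (hN N le_rfl).2]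
  simp [dyadicRamp]

lemma one_lt_of_dyadicBump_pos {n : ℕ} {t : ℝ} (h : 0 < dyadicBump n t) : 1 < 2 ^ (n + 1) * t :=
  one_lt_of_dyadicRamp_pos (h.trans_le (sub_le_self _ (dyadicRamp_mem_Icc n t).1))

lemma lt_two_of_dyadicBump_pos {n : ℕ} {t : ℝ} (hn : n ≠ 0) (h : 0 < dyadicBump n t) :
    2 ^ n * t < 2 :=
  lt_two_of_dyadicRamp_lt_one hn
    (sub_pos.1 (h.trans_le (sub_le_sub_right (dyadicRamp_mem_Icc _ t).2 _)))

lemma summable_div_two_pow {a : ℕ → ℝ} (ha : ∀ k, a k ∈ Icc (0 : ℝ) 1) :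
    Summable fun k => a k / 2 ^ k :=
  summable_geometric_two.of_nonneg_of_le (fun k => div_nonneg (ha k).1 (by positivity))
    fun k => by rw [one_div_pow]; exact div_le_div_of_nonneg_right (ha k).2 (by positivity)

section Space

variable {X : Type*} [TopologicalSpace X] {θ : X → ℝ}

lemma closure_setOf_dyadicBump_pos_subset (hθ : Continuous θ) (n : ℕ) :
    closure {y | 0 < dyadicBump n (θ y)} ⊆ {y | 1 ≤ 2 ^ (n + 1) * θ y} :=
  closure_minimal (fun _ hy => (one_lt_of_dyadicBump_pos hy).le)
    (isClosed_le continuous_const (continuous_const.mul hθ))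

lemma exists_isOpen_finite_dyadicBump_pos (hθ : Continuous θ) {x : X} (hx : 0 < θ x) :
    ∃ U : Set X, IsOpen U ∧ x ∈ U ∧ {n | (U ∩ {y | 0 < dyadicBump n (θ y)}).Nonempty}.Finite := by
  obtain ⟨N, hN⟩ := eventually_atTop.1 (eventually_dyadicBump_eq_zero (half_pos hx))
  refine ⟨θ ⁻¹' Ioi (θ x / 2), isOpen_Ioi.preimage hθ, half_lt_self hx, (finite_Iio N).subset ?_⟩
  rintro n ⟨y, hyU, hy⟩
  by_contra hn
  exact hy.ne' (hN n (not_lt.1 hn) _ (le_of_lt hyU))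

lemma continuous_tsum_div_two_pow {g : ℕ → X → ℝ} (hg : ∀ k, Continuous (g k))
    (hg01 : ∀ k x, g k x ∈ Icc (0 : ℝ) 1) : Continuous fun x => ∑' k, g k x / 2 ^ k := by
  refine continuous_tsum (fun k => (hg k).div_const _) summable_geometric_two fun k x => ?_
  rw [Real.norm_of_nonneg (div_nonneg (hg01 k x).1 (by positivity)), one_div_pow]
  exact div_le_div_of_nonneg_right (hg01 k x).2 (by positivity)

theorem exists_continuous_preimage_zero_eq_and_abs_lt {F : Set X} {ψ : X → ℝ}
    (hψ : Continuous ψ) (hψ0 : ∀ x, 0 ≤ ψ x) (hF : F = ψ ⁻¹' {0})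
    {h : ℕ → X → ℝ} (hh : ∀ n, Continuous (h n)) (hhF : ∀ n, F ⊆ h n ⁻¹' {0}) :
    ∃ θ : X → ℝ, Continuous θ ∧ (∀ x, 0 ≤ θ x) ∧ θ ⁻¹' {0} = F ∧
      ∀ n ≠ 0, ∀ x, 2 ^ n * θ x < 2 → |h n x| < 1 / n := by
  set g : ℕ → X → ℝ := fun k x => min 1 (k * |h k x|)
  have hg01 : ∀ k x, g k x ∈ Icc (0 : ℝ) 1 := fun k x => ⟨by positivity, min_le_left _ _⟩
  set S : X → ℝ := fun x => ∑' k, g k x / 2 ^ k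
  have hS0 : ∀ x, 0 ≤ S x := fun x => tsum_nonneg fun k => div_nonneg (hg01 k x).1 (by positivity)
  have hSF : ∀ x ∈ F, S x = 0 := fun x hx => by simp [S, g, show ∀ k, h k x = 0 from (hhF · hx)]
  have hgS : ∀ n x, g n x ≤ 2 ^ n * S x := fun n x => by
    rw [← div_le_iff₀' (by positivity)]
    exact (summable_div_two_pow (hg01 · x)).le_tsum n
      fun k _ => div_nonneg (hg01 k x).1 (by positivity)
  refine ⟨fun x => ψ x + 2 * S x,
    hψ.add (continuous_const.mul (continuous_tsum_div_two_pow (fun k => by fun_prop) hg01)),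
    fun x => add_nonneg (hψ0 x) (mul_nonneg zero_le_two (hS0 x)), ?_, fun n hn x hx => ?_⟩
  · ext x
    simp only [mem_preimage, mem_singleton_iff]
    rw [add_eq_zero_iff_of_nonneg (hψ0 x) (mul_nonneg zero_le_two (hS0 x)), hF]
    exact ⟨And.left, fun hx => ⟨hx, by rw [hSF x (hF ▸ hx), mul_zero]⟩⟩
  · have hgn : g n x < 1 := by
      have hψn : 0 ≤ 2 ^ n * ψ x := mul_nonneg (by positivity) (hψ0 x)
      linarith [hgS n x, show 2 ^ n * (ψ x + 2 * S x) < 2 from hx]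
    rw [lt_div_iff₀ (by positivity), mul_comm]
    simpa [g] using hgn

end Space

theorem stmt3 {X : Type*} [TopologicalSpace X] (F : Set X)
    (hF : ∃ φ : X → ℝ, Continuous φ ∧ (∀ x, φ x ∈ Icc (0:ℝ) 1) ∧ F = φ ⁻¹' {0})
    (h : ℕ → X → ℝ) (hh : ∀ n, Continuous (h n))
    (hhF : ∀ n, F ⊆ (h n) ⁻¹' {0})
    (G : Set X) (hG : G = Fᶜ) :
    ∃ φ : ℕ → X → ℝ,
      (∀ n, ContinuousOn (φ n) G) ∧
      (∀ n, ∀ x ∈ G, φ n x ∈ Icc (0:ℝ) 1) ∧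
      (∀ x ∈ G, HasSum (fun n => φ n x) 1) ∧
      -- local finiteness of the supports on G
      (∀ x ∈ G, ∃ U : Set X, IsOpen U ∧ x ∈ U ∧
        {n : ℕ | (U ∩ {y ∈ G | 0 < φ n y}).Nonempty}.Finite) ∧
      -- (a) closures of supports are disjoint from F
      (∀ n, closure {y ∈ G | 0 < φ n y} ∩ F = ∅) ∧
      -- (b)
      (∀ n, 1 ≤ n → {y ∈ G | 0 < φ n y} ⊆ (h n) ⁻¹' (Ioo (-(1/(n:ℝ))) (1/(n:ℝ)))) := by
  obtain ⟨ψ, hψ, hψ01, hψF⟩ := hF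
  obtain ⟨θ, hθ, hθ0, hθF, hθh⟩ :=
    exists_continuous_preimage_zero_eq_and_abs_lt hψ (fun x => (hψ01 x).1) hψF hh hhF
  have hθG : ∀ x ∈ G, 0 < θ x := fun x hx =>
    (hθ0 x).lt_of_ne' fun h0 => (hG ▸ hx) (hθF ▸ h0)
  refine ⟨fun n x => dyadicBump n (θ x), fun n => ((continuous_dyadicBump n).comp hθ).continuousOn,
    fun n x _ => dyadicBump_mem_Icc n (hθ0 x), fun x hx => hasSum_dyadicBump (hθG x hx),
    fun x hx => ?_, fun n => ?_, fun n hn y hy => ?_⟩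
  · obtain ⟨U, hU, hxU, hfin⟩ := exists_isOpen_finite_dyadicBump_pos hθ (hθG x hx)
    exact ⟨U, hU, hxU, hfin.subset fun n ⟨y, hyU, _, hy⟩ => ⟨y, hyU, hy⟩⟩
  · refine eq_empty_of_forall_notMem fun y ⟨hy, hyF⟩ => ?_
    have hθy : 1 ≤ 2 ^ (n + 1) * θ y :=
      closure_setOf_dyadicBump_pos_subset hθ n (closure_mono (fun _ hz => hz.2) hy)
    have hy0 : θ y = 0 := by rw [← hθF] at hyF; exact hyF
    norm_num [hy0] at hθy
  · exact abs_lt.1 (hθh n (by omega) y (lt_two_of_dyadicBump_pos (by omega) hy.2))
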